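/- Let θ be a semi-basic 1-form on E which is not d_J-closed (d_Jθ ≠ 0). Then L_Sθ is closed, i.e., d(L_Sθ) = 0, if and only if the following five conditions hold: (H1) (d_Jθ)∧dt = 0; (H2) (d_hθ)∧dt = 0; (H3) (d_Φθ)∧dt = 0; (H4) (∇dθ)∧dt = 0, where ∇dθ := L_S(dθ) − i_Ψ(dθ); and (DS) the 1-form i_Sdθ is a dual symmetry of S, i.e., L_S(i_Sdθ) = 0. -/

import Mathlib

noncomputable section

/-- The local model `E = ℝ × (Fin n → ℝ) × (Fin n → ℝ)` of the first jet bundle `J¹π`,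
with coordinates `(t, xⁱ, yⁱ)`.  Tangent vectors at a point are identified with
elements of `E n` itself. -/
abbrev E (n : ℕ) : Type := ℝ × (Fin n → ℝ) × (Fin n → ℝ)

variable {n : ℕ}

/-- A map between normed spaces is `C^∞`-smooth. -/
def Cinf {α β : Type*} [NormedAddCommGroup α] [NormedSpace ℝ α]
    [NormedAddCommGroup β] [NormedSpace ℝ β] (f : α → β) : Prop :=
  ContDiff ℝ (⊤ : ℕ∞) f

/-- A tangent vector having only a `y`-component. -/
def ypart (w : Fin n → ℝ) : E n := (0, 0, w)

/-- The coordinate vector `∂/∂yⁱ`. -/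
def pdy (i : Fin n) : E n := ypart (Pi.single i 1)

/-- The coordinate vector `∂/∂xⁱ`. -/
def pdx (i : Fin n) : E n := (0, Pi.single i 1, 0)

/-- Action of a vector field `X` on a function `f`: `X(f)(p) = df_p(X(p))`. -/
def vfd (X : E n → E n) (f : E n → ℝ) : E n → ℝ := fun p => fderiv ℝ f p (X p)

/-- Lie bracket of vector fields on `E n`. -/
def lieb (X Y : E n → E n) : E n → E n :=
  fun p => fderiv ℝ Y p (X p) - fderiv ℝ X p (Y p)

/-- The semispray `S = ∂/∂t + Σ yⁱ ∂/∂xⁱ − 2 Σ Gⁱ ∂/∂yⁱ` associated to `G`. -/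
def Ssp (G : E n → Fin n → ℝ) : E n → E n := fun p => (1, p.2.2, fun i => -(2 * G p i))

/-- Nonlinear connection coefficients `Nⁱⱼ = ∂Gⁱ/∂yʲ`. -/
def Nc (G : E n → Fin n → ℝ) (i j : Fin n) : E n → ℝ :=
  fun p => fderiv ℝ (fun q => G q i) p (pdy j)

/-- `Nⁱ₀ = 2Gⁱ − Σⱼ Nⁱⱼ yʲ`. -/
def N0c (G : E n → Fin n → ℝ) (i : Fin n) : E n → ℝ :=
  fun p => 2 * G p i - ∑ j, Nc G i j p * p.2.2 j

/-- The horizontal vector field `δ/δxⁱ = ∂/∂xⁱ − Σⱼ Nʲᵢ ∂/∂yʲ`. -/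
def ddx (G : E n → Fin n → ℝ) (i : Fin n) : E n → E n :=
  fun p => (0, Pi.single i 1, fun j => -(Nc G j i p))

/-- The contact 1-form `δxⁱ = dxⁱ − yⁱ dt`. -/
def dxi (i : Fin n) : E n → E n → ℝ := fun p w => w.2.1 i - p.2.2 i * w.1

/-- The 1-form `δyⁱ = dyⁱ + Σⱼ Nⁱⱼ dxʲ + Nⁱ₀ dt`. -/
def dyi (G : E n → Fin n → ℝ) (i : Fin n) : E n → E n → ℝ :=
  fun p w => w.2.2 i + (∑ j, Nc G i j p * w.2.1 j) + N0c G i p * w.1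

/-- The vertical endomorphism `J = Σᵢ ∂/∂yⁱ ⊗ δxⁱ`. -/
def Jv : E n → E n → E n := fun p w => ypart (fun i => dxi i p w)

/-- The horizontal projector `h = S ⊗ dt + Σᵢ δ/δxⁱ ⊗ δxⁱ`. -/
def hv (G : E n → Fin n → ℝ) : E n → E n → E n :=
  fun p w => w.1 • Ssp G p + ∑ i, dxi i p w • ddx G i p

/-- Jacobi endomorphism components `Rⁱⱼ = 2 ∂Gⁱ/∂xʲ − Σₖ Nⁱₖ Nᵏⱼ − S(Nⁱⱼ)`. -/
def Rjac (G : E n → Fin n → ℝ) (i j : Fin n) : E n → ℝ := fun p =>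
  2 * fderiv ℝ (fun q => G q i) p (pdx j) - (∑ k, Nc G i k p * Nc G k j p)
    - vfd (Ssp G) (Nc G i j) p

/-- Curvature components `Rⁱⱼₖ = (δ/δxᵏ)(Nⁱⱼ) − (δ/δxʲ)(Nⁱₖ)`. -/
def Rcur (G : E n → Fin n → ℝ) (i j k : Fin n) : E n → ℝ := fun p =>
  fderiv ℝ (Nc G i j) p (ddx G k p) - fderiv ℝ (Nc G i k) p (ddx G j p)

/-- The Jacobi endomorphism `Φ = Σᵢⱼ Rʲᵢ ∂/∂yʲ ⊗ δxⁱ`. -/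
def Phi (G : E n → Fin n → ℝ) : E n → E n → E n :=
  fun p w => ypart (fun j => ∑ i, Rjac G j i p * dxi i p w)

/-- The tensor `Ψ = Σᵢ δ/δxⁱ ⊗ δyⁱ − Σᵢⱼ Rʲᵢ ∂/∂yʲ ⊗ δxⁱ`. -/
def Psi (G : E n → Fin n → ℝ) : E n → E n → E n :=
  fun p w => (∑ i, dyi G i p w • ddx G i p) - Phi G p w

/-- Lie derivative of a 1-form `θ` along `X`, evaluated on a vector field `Y`:
`(L_Xθ)(Y) = X(θ(Y)) − θ([X,Y])`. -/
def lieD (X : E n → E n) (θ : E n → E n → ℝ) (Y : E n → E n) : E n → ℝ :=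
  fun p => fderiv ℝ (fun q => θ q (Y q)) p (X p) - θ p (lieb X Y p)

/-- Exterior derivative of a 1-form: `dθ(X,Y) = X(θ(Y)) − Y(θ(X)) − θ([X,Y])`. -/
def extD (θ : E n → E n → ℝ) (X Y : E n → E n) : E n → ℝ :=
  fun p => fderiv ℝ (fun q => θ q (Y q)) p (X p) - fderiv ℝ (fun q => θ q (X q)) p (Y p)
    - θ p (lieb X Y p)

/-- Exterior derivative of a 1-form given as an operator on vector fields. -/
def extDop (α : (E n → E n) → E n → ℝ) (X Y : E n → E n) : E n → ℝ :=
  fun p => fderiv ℝ (α Y) p (X p) - fderiv ℝ (α X) p (Y p) - α (lieb X Y) p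

/-- The semi-basic 1-form `θ₀ dt + Σᵢ θᵢ δxⁱ`. -/
def sbform (θ0 : E n → ℝ) (θc : Fin n → E n → ℝ) : E n → E n → ℝ :=
  fun p w => θ0 p * w.1 + ∑ i, θc i p * dxi i p w

/-- `d_Jθ(X,Y) = dθ(JX,Y) + dθ(X,JY)` for a semi-basic 1-form `θ`. -/
def dJf (θ : E n → E n → ℝ) (X Y : E n → E n) : E n → ℝ :=
  fun p => extD θ (fun q => Jv q (X q)) Y p + extD θ X (fun q => Jv q (Y q)) p

/-- `d_hθ(X,Y) = dθ(hX,Y) + dθ(X,hY) − dθ(X,Y)` for a semi-basic 1-form `θ`. -/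
def dhf (G : E n → Fin n → ℝ) (θ : E n → E n → ℝ) (X Y : E n → E n) : E n → ℝ :=
  fun p => extD θ (fun q => hv G q (X q)) Y p + extD θ X (fun q => hv G q (Y q)) p
    - extD θ X Y p

/-- `d_Φθ(X,Y) = dθ(ΦX,Y) + dθ(X,ΦY)` for a semi-basic 1-form `θ`. -/
def dPhif (G : E n → Fin n → ℝ) (θ : E n → E n → ℝ) (X Y : E n → E n) : E n → ℝ :=
  fun p => extD θ (fun q => Phi G q (X q)) Y p + extD θ X (fun q => Phi G q (Y q)) p

/-- Lie derivative of the 2-form `dθ` along a vector field `SS`: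
`(L_S dθ)(X,Y) = S(dθ(X,Y)) − dθ([S,X],Y) − dθ(X,[S,Y])`. -/
def lieD2 (SS : E n → E n) (θ : E n → E n → ℝ) (X Y : E n → E n) : E n → ℝ :=
  fun p => fderiv ℝ (extD θ X Y) p (SS p) - extD θ (lieb SS X) Y p - extD θ X (lieb SS Y) p

/-- `∇dθ = L_S(dθ) − i_Ψ(dθ)`. -/
def nabD (G : E n → Fin n → ℝ) (θ : E n → E n → ℝ) (X Y : E n → E n) : E n → ℝ :=
  fun p => lieD2 (Ssp G) θ X Y p
    - (extD θ (fun q => Psi G q (X q)) Y p + extD θ X (fun q => Psi G q (Y q)) p)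

/-- The dynamical covariant derivative of an `n`-tuple of functions:
`(∇f)ᵢ = S(fᵢ) − Σⱼ Nʲᵢ fⱼ`. -/
def covd (G : E n → Fin n → ℝ) (f : Fin n → E n → ℝ) : Fin n → E n → ℝ :=
  fun i p => vfd (Ssp G) (f i) p - ∑ j, Nc G j i p * f j p

/-!
Every expression in the statement is tensorial: on smooth vector fields it is a pointwise
bilinear form applied to their values, built from `dθ`, from `L_S dθ` (which equals `d L_S θ`
by the symmetry of second derivatives) and from the insertions `i_A` of `J, h, Φ, Ψ`.
For an alternating form `B` and a covector `α` with `α s = 1`, `B ∧ α = 0` iff `B` vanishes on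
`ker α`, and `B = 0` iff in addition `i_s B = 0`. With `α = dt` and `s = S`, closedness of
`L_S θ` splits into the vanishing of `L_S dθ` on `ker dt` and `i_S L_S dθ = L_S (i_S dθ) = 0`.

On the frame `∂/∂xⁱ, ∂/∂yⁱ` of `ker dt`, with `gᵢⱼ = ∂θⱼ/∂yⁱ` and `Aᵢⱼ = ∂θⱼ/∂xⁱ − ∂θᵢ/∂xʲ`,
(H1)–(H3) say that `g` is symmetric, that `A = Nᵀg − (Nᵀg)ᵀ` and that `Rᵀg` is symmetric, while
(H4) says `∇g = 0` together with an `xx`-identity that follows from the first three. The `yy`-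
and `xy`-components of `L_S dθ` vanish iff `g` is symmetric, `∇g = 0` and (H2) holds; given
these, differentiating (H2) along `S` turns the `xx`-component into the antisymmetric part
of `Rᵀg`.
-/

section AlternatingForms

open LinearMap (BilinForm)

variable {R V : Type*} [CommRing R] [AddCommGroup V] [Module R V]

def insertEndo (B : BilinForm R V) (A : V →ₗ[R] V) : BilinForm R V := B ∘ₗ A + B.compl₂ A

@[simp] lemma insertEndo_apply (B : BilinForm R V) (A : V →ₗ[R] V) (u v : V) :
    insertEndo B A u v = B (A u) v + B u (A v) := rfl

lemma LinearMap.IsAlt.insertEndo {B : BilinForm R V} (hB : LinearMap.IsAlt B) (A : V →ₗ[R] V) :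
    LinearMap.IsAlt (insertEndo B A) := fun u => by
  rw [insertEndo_apply, ← hB.neg]
  exact neg_add_cancel _

def skewPart (B : BilinForm R V) : BilinForm R V := B - B.flip

lemma isAlt_skewPart (B : BilinForm R V) : LinearMap.IsAlt (skewPart B) := fun u => by
  simp [skewPart]

variable {B : BilinForm R V} {α : V →ₗ[R] R} {s : V}

lemma LinearMap.IsAlt.apply_eq_of_forall_ker (hB : LinearMap.IsAlt B) (hs : α s = 1)
    (hker : ∀ u v, α u = 0 → α v = 0 → B u v = 0) (u v : V) :
    B u v = α u * B s v - α v * B s u := by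
  have hu : α (u - α u • s) = 0 := by simp [hs]
  have hv : α (v - α v • s) = 0 := by simp [hs]
  have key := hker _ _ hu hv
  simp only [map_sub, map_smul, LinearMap.sub_apply, LinearMap.smul_apply, smul_eq_mul,
    hB.self_eq_zero] at key
  linear_combination key - α v * hB.neg s u

/-- The left-hand side is `B ∧ α = 0` evaluated on three vectors. -/
lemma LinearMap.IsAlt.wedge_eq_zero_iff (hB : LinearMap.IsAlt B) (hs : α s = 1) :
    (∀ u v w, B u v * α w + B v w * α u + B w u * α v = 0) ↔
      ∀ u v, α u = 0 → α v = 0 → B u v = 0 := by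
  refine ⟨fun h u v hu hv => by simpa [hu, hv, hs] using h u v s, fun hker u v w => ?_⟩
  rw [hB.apply_eq_of_forall_ker hs hker u v, hB.apply_eq_of_forall_ker hs hker v w,
    hB.apply_eq_of_forall_ker hs hker w u]
  ring

lemma LinearMap.IsAlt.eq_zero_iff (hB : LinearMap.IsAlt B) (hs : α s = 1) :
    (∀ u v, B u v = 0) ↔ (∀ u v, α u = 0 → α v = 0 → B u v = 0) ∧ ∀ v, B s v = 0 := by
  refine ⟨fun h => ⟨fun u v _ _ => h u v, h s⟩, fun ⟨hker, hs'⟩ u v => ?_⟩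
  rw [hB.apply_eq_of_forall_ker hs hker u v, hs', hs', mul_zero, mul_zero, sub_zero]

end AlternatingForms

section KernelOfDt

open LinearMap (BilinForm)

@[simp] lemma pdx_fst (i : Fin n) : (pdx i).1 = 0 := rfl
@[simp] lemma pdx_snd_fst (i : Fin n) : (pdx i).2.1 = Pi.single i 1 := rfl
@[simp] lemma pdx_snd_snd (i : Fin n) : (pdx i).2.2 = 0 := rfl
@[simp] lemma ypart_fst (c : Fin n → ℝ) : (ypart c).1 = 0 := rfl
@[simp] lemma ypart_snd_fst (c : Fin n → ℝ) : (ypart c).2.1 = 0 := rfl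
@[simp] lemma ypart_snd_snd (c : Fin n → ℝ) : (ypart c).2.2 = c := rfl
@[simp] lemma pdy_fst (i : Fin n) : (pdy i).1 = 0 := rfl
@[simp] lemma pdy_snd_fst (i : Fin n) : (pdy i).2.1 = 0 := rfl
@[simp] lemma pdy_snd_snd (i : Fin n) : (pdy i).2.2 = Pi.single i 1 := rfl

lemma ypart_eq_sum (c : Fin n → ℝ) : ypart c = ∑ k, c k • pdy k := by
  ext <;> simp [Prod.fst_sum, Prod.snd_sum, Pi.single_apply]

lemma eq_sum_pdx_add_sum_pdy {u : E n} (hu : u.1 = 0) :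
    u = ∑ k, u.2.1 k • pdx k + ∑ k, u.2.2 k • pdy k := by
  ext <;> simp [hu, Prod.fst_sum, Prod.snd_sum, Pi.single_apply]

lemma forall_ker_fst_iff {B : BilinForm ℝ (E n)} (hB : LinearMap.IsAlt B) :
    (∀ u v : E n, u.1 = 0 → v.1 = 0 → B u v = 0) ↔
      (∀ i j, B (pdx i) (pdx j) = 0) ∧ (∀ i j, B (pdx i) (pdy j) = 0) ∧
        ∀ i j, B (pdy i) (pdy j) = 0 := by
  refine ⟨fun h => ⟨fun i j => h _ _ rfl rfl, fun i j => h _ _ rfl rfl,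
    fun i j => h _ _ rfl rfl⟩, fun ⟨hxx, hxy, hyy⟩ u v hu hv => ?_⟩
  have hyx : ∀ i j, B (pdy i) (pdx j) = 0 := fun i j => by rw [← hB.neg, hxy, neg_zero]
  rw [eq_sum_pdx_add_sum_pdy hu, eq_sum_pdx_add_sum_pdy hv]
  simp [hxx, hxy, hyx, hyy]

lemma wedge_dt_eq_zero_iff {B : BilinForm ℝ (E n)} (hB : LinearMap.IsAlt B) :
    (∀ u v w : E n, B u v * w.1 + B v w * u.1 + B w u * v.1 = 0) ↔
      (∀ i j, B (pdx i) (pdx j) = 0) ∧ (∀ i j, B (pdx i) (pdy j) = 0) ∧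
        ∀ i j, B (pdy i) (pdy j) = 0 :=
  (hB.wedge_eq_zero_iff (α := LinearMap.fst ℝ ℝ _) (s := (1, 0)) rfl).trans
    (forall_ker_fst_iff hB)

lemma forall_fields_wedge_dt_iff {F : (E n → E n) → (E n → E n) → E n → ℝ}
    {B : E n → BilinForm ℝ (E n)} (hB : ∀ p, LinearMap.IsAlt (B p))
    (hF : ∀ X Y, Cinf X → Cinf Y → ∀ p, F X Y p = B p (X p) (Y p)) :
    (∀ X Y Z : E n → E n, Cinf X → Cinf Y → Cinf Z → ∀ p : E n,
        F X Y p * (Z p).1 + F Y Z p * (X p).1 + F Z X p * (Y p).1 = 0) ↔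
      ∀ p, (∀ i j, B p (pdx i) (pdx j) = 0) ∧ (∀ i j, B p (pdx i) (pdy j) = 0) ∧
        ∀ i j, B p (pdy i) (pdy j) = 0 := by
  simp_rw [← wedge_dt_eq_zero_iff (hB _)]
  refine ⟨fun h p u v w => ?_, fun h X Y Z hX hY hZ p => ?_⟩
  · simpa only [hF _ _ contDiff_const contDiff_const] using
      h (fun _ => u) (fun _ => v) (fun _ => w) contDiff_const contDiff_const contDiff_const p
  · rw [hF X Y hX hY, hF Y Z hY hZ, hF Z X hZ hX]
    exact h p _ _ _

end KernelOfDt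

section Tensoriality

open LinearMap (BilinForm)

lemma Cinf.differentiableAt {α β : Type*} [NormedAddCommGroup α] [NormedSpace ℝ α]
    [NormedAddCommGroup β] [NormedSpace ℝ β] {f : α → β} (hf : Cinf f) {p : α} :
    DifferentiableAt ℝ f p :=
  (hf.differentiable (by simp)).differentiableAt

lemma Cinf.fderiv {α β : Type*} [NormedAddCommGroup α] [NormedSpace ℝ α]
    [NormedAddCommGroup β] [NormedSpace ℝ β] {f : α → β} (hf : Cinf f) :
    Cinf (fderiv ℝ f) :=
  hf.fderiv_right (by simp)

lemma Cinf.isSymmSndFDerivAt {α β : Type*} [NormedAddCommGroup α] [NormedSpace ℝ α]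
    [NormedAddCommGroup β] [NormedSpace ℝ β] {f : α → β} (hf : Cinf f) (p : α) :
    IsSymmSndFDerivAt ℝ f p :=
  hf.contDiffAt.isSymmSndFDerivAt <| by
    rw [minSmoothness_of_isRCLikeNormedField]; exact WithTop.coe_le_coe.mpr le_top

lemma fderiv_clm_apply_apply {F H : Type*} [NormedAddCommGroup F] [NormedSpace ℝ F]
    [NormedAddCommGroup H] [NormedSpace ℝ H] {c : F → F →L[ℝ] H} {Y : F → F} {p : F}
    (hc : DifferentiableAt ℝ c p) (hY : DifferentiableAt ℝ Y p) (u : F) :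
    fderiv ℝ (fun q => c q (Y q)) p u = fderiv ℝ c p u (Y p) + c p (fderiv ℝ Y p u) := by
  rw [fderiv_clm_apply hc hY]
  simp only [add_apply, ContinuousLinearMap.comp_apply,
    ContinuousLinearMap.flip_apply]
  rw [add_comm]

lemma cinf_lieb {X Y : E n → E n} (hX : Cinf X) (hY : Cinf Y) : Cinf (lieb X Y) :=
  (hY.fderiv.clm_apply hX).sub (hX.fderiv.clm_apply hY)

lemma extDop_eq_skewPart {α : E n → E n →L[ℝ] ℝ} (hα : Cinf α) {X Y : E n → E n}
    (hX : Cinf X) (hY : Cinf Y) (p : E n) :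
    extDop (fun Z q => α q (Z q)) X Y p =
      skewPart (fderiv ℝ α p).toLinearMap₁₂ (X p) (Y p) := by
  simp only [extDop, lieb, fderiv_clm_apply_apply hα.differentiableAt hY.differentiableAt,
    fderiv_clm_apply_apply hα.differentiableAt hX.differentiableAt, map_sub, skewPart,
    LinearMap.sub_apply, LinearMap.BilinForm.flip_apply,
    ContinuousLinearMap.toLinearMap₁₂_apply_apply_apply]
  ring

lemma cinf_Ssp {G : E n → Fin n → ℝ} (hG : Cinf G) : Cinf (Ssp G) := by
  unfold Cinf Ssp at *; fun_prop

variable (θ0 : E n → ℝ) (θc : Fin n → E n → ℝ) (G : E n → Fin n → ℝ)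

def formCLM (q : E n) : E n →L[ℝ] ℝ :=
  θ0 q • ContinuousLinearMap.fst ℝ ℝ _ + ∑ i, θc i q •
    ((ContinuousLinearMap.proj (R := ℝ) (φ := fun _ : Fin n => ℝ) i).comp
        ((ContinuousLinearMap.fst ℝ _ _).comp (ContinuousLinearMap.snd ℝ ℝ _))
      - q.2.2 i • ContinuousLinearMap.fst ℝ ℝ _)

@[simp] lemma formCLM_apply (q w : E n) : formCLM θ0 θc q w = sbform θ0 θc q w := by
  simp [formCLM, sbform, dxi]

/-- `dθ` at a point. -/
def dForm (p : E n) : BilinForm ℝ (E n) := skewPart (fderiv ℝ (formCLM θ0 θc) p).toLinearMap₁₂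

/-- `L_S θ`, with values in `E n →L[ℝ] ℝ`. -/
def lieFormCLM (q : E n) : E n →L[ℝ] ℝ :=
  fderiv ℝ (formCLM θ0 θc) q (Ssp G q) + (formCLM θ0 θc q).comp (fderiv ℝ (Ssp G) q)

/-- `L_S dθ` at a point. -/
def lieDForm (p : E n) : BilinForm ℝ (E n) :=
  skewPart (fderiv ℝ (fderiv ℝ (formCLM θ0 θc)) p (Ssp G p)).toLinearMap₁₂
    + insertEndo (dForm θ0 θc p) (fderiv ℝ (Ssp G) p : E n →ₗ[ℝ] E n)

lemma isAlt_dForm (p : E n) : LinearMap.IsAlt (dForm θ0 θc p) := isAlt_skewPart _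

lemma isAlt_lieDForm (p : E n) : LinearMap.IsAlt (lieDForm θ0 θc G p) := fun u => by
  simp only [lieDForm, LinearMap.add_apply, isAlt_skewPart _ u,
    (isAlt_dForm θ0 θc p).insertEndo _ u, add_zero]

variable {θ0 θc G}

lemma cinf_formCLM (h0 : Cinf θ0) (hc : ∀ i, Cinf (θc i)) : Cinf (formCLM θ0 θc) := by
  unfold Cinf formCLM at *; fun_prop

lemma cinf_lieFormCLM (h0 : Cinf θ0) (hc : ∀ i, Cinf (θc i)) (hG : Cinf G) :
    Cinf (lieFormCLM θ0 θc G) :=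
  ((cinf_formCLM h0 hc).fderiv.clm_apply (cinf_Ssp hG)).add
    ((cinf_formCLM h0 hc).clm_comp (cinf_Ssp hG).fderiv)

lemma extD_eq_dForm (h0 : Cinf θ0) (hc : ∀ i, Cinf (θc i)) {X Y : E n → E n}
    (hX : Cinf X) (hY : Cinf Y) (p : E n) :
    extD (sbform θ0 θc) X Y p = dForm θ0 θc p (X p) (Y p) := by
  rw [dForm, ← extDop_eq_skewPart (cinf_formCLM h0 hc) hX hY]
  simp [extD, extDop]

lemma lieD_eq_lieFormCLM (h0 : Cinf θ0) (hc : ∀ i, Cinf (θc i)) {Y : E n → E n}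
    (hY : Cinf Y) :
    lieD (Ssp G) (sbform θ0 θc) Y = fun q => lieFormCLM θ0 θc G q (Y q) := by
  ext q
  simp only [lieD, ← formCLM_apply, lieb, map_sub,
    fderiv_clm_apply_apply (cinf_formCLM h0 hc).differentiableAt hY.differentiableAt,
    lieFormCLM, add_apply, ContinuousLinearMap.comp_apply]
  ring

/-- Cartan's identity `d L_S = L_S d`; it rests on the symmetry of second derivatives
of `θ` and of `S`. -/
lemma skewPart_fderiv_lieFormCLM (h0 : Cinf θ0) (hc : ∀ i, Cinf (θc i)) (hG : Cinf G)
    (p : E n) :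
    skewPart (fderiv ℝ (lieFormCLM θ0 θc G) p).toLinearMap₁₂ = lieDForm θ0 θc G p := by
  have hθ := cinf_formCLM h0 hc
  have hS := cinf_Ssp hG
  have hD : ∀ u, fderiv ℝ (lieFormCLM θ0 θc G) p u
      = fderiv ℝ (fderiv ℝ (formCLM θ0 θc)) p u (Ssp G p)
        + fderiv ℝ (formCLM θ0 θc) p (fderiv ℝ (Ssp G) p u)
        + ((formCLM θ0 θc p).comp (fderiv ℝ (fderiv ℝ (Ssp G)) p u)
          + (fderiv ℝ (formCLM θ0 θc) p u).comp (fderiv ℝ (Ssp G) p)) := fun u => by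
    unfold lieFormCLM
    rw [fderiv_fun_add (Cinf.differentiableAt (hθ.fderiv.clm_apply hS))
        (Cinf.differentiableAt (hθ.clm_comp hS.fderiv)), add_apply,
      fderiv_clm_apply_apply hθ.fderiv.differentiableAt hS.differentiableAt,
      fderiv_clm_comp hθ.differentiableAt hS.fderiv.differentiableAt]
    simp only [add_apply, ContinuousLinearMap.comp_apply,
      ContinuousLinearMap.flip_apply, ContinuousLinearMap.compL_apply]
  refine LinearMap.ext₂ fun u v => ?_
  simp only [skewPart, lieDForm, dForm, hD, LinearMap.sub_apply, LinearMap.add_apply,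
    LinearMap.BilinForm.flip_apply, ContinuousLinearMap.toLinearMap₁₂_apply_apply_apply,
    add_apply, ContinuousLinearMap.comp_apply, insertEndo_apply,
    ContinuousLinearMap.coe_coe]
  rw [hθ.isSymmSndFDerivAt p u (Ssp G p), hθ.isSymmSndFDerivAt p v (Ssp G p),
    hS.isSymmSndFDerivAt p u v]
  ring

lemma extDop_lieD_eq_lieDForm (h0 : Cinf θ0) (hc : ∀ i, Cinf (θc i)) (hG : Cinf G)
    {X Y : E n → E n} (hX : Cinf X) (hY : Cinf Y) (p : E n) :
    extDop (lieD (Ssp G) (sbform θ0 θc)) X Y p = lieDForm θ0 θc G p (X p) (Y p) := by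
  rw [← skewPart_fderiv_lieFormCLM h0 hc hG,
    ← extDop_eq_skewPart (cinf_lieFormCLM h0 hc hG) hX hY]
  simp only [extDop, lieD_eq_lieFormCLM h0 hc hX, lieD_eq_lieFormCLM h0 hc hY,
    lieD_eq_lieFormCLM h0 hc (cinf_lieb hX hY)]

end Tensoriality

section LieDerivativeOfDForm

variable {θ0 : E n → ℝ} {θc : Fin n → E n → ℝ} {G : E n → Fin n → ℝ}

lemma fderiv_clm_apply_apply₂ {F H : Type*} [NormedAddCommGroup F] [NormedSpace ℝ F]
    [NormedAddCommGroup H] [NormedSpace ℝ H] {D : F → F →L[ℝ] F →L[ℝ] H} {X Y : F → F}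
    {p : F} (hD : Cinf D) (hX : Cinf X) (hY : Cinf Y) (w : F) :
    fderiv ℝ (fun q => D q (X q) (Y q)) p w
      = fderiv ℝ D p w (X p) (Y p) + D p (fderiv ℝ X p w) (Y p) + D p (X p) (fderiv ℝ Y p w) := by
  rw [fderiv_clm_apply_apply (Cinf.differentiableAt (hD.clm_apply hX)) hY.differentiableAt,
    fderiv_clm_apply_apply hD.differentiableAt hX.differentiableAt, add_apply]

lemma fderiv_dForm_apply_apply (h0 : Cinf θ0) (hc : ∀ i, Cinf (θc i)) {X Y : E n → E n}
    (hX : Cinf X) (hY : Cinf Y) (p w : E n) :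
    fderiv ℝ (fun q => dForm θ0 θc q (X q) (Y q)) p w
      = skewPart (fderiv ℝ (fderiv ℝ (formCLM θ0 θc)) p w).toLinearMap₁₂ (X p) (Y p)
        + dForm θ0 θc p (fderiv ℝ X p w) (Y p) + dForm θ0 θc p (X p) (fderiv ℝ Y p w) := by
  have hD := (cinf_formCLM h0 hc).fderiv
  have hXY := fderiv_clm_apply_apply₂ hD hX hY (p := p) w
  have hYX := fderiv_clm_apply_apply₂ hD hY hX (p := p) w
  simp only [dForm, skewPart, LinearMap.sub_apply, LinearMap.BilinForm.flip_apply,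
    ContinuousLinearMap.toLinearMap₁₂_apply_apply_apply]
  rw [fderiv_fun_sub (Cinf.differentiableAt ((hD.clm_apply hX).clm_apply hY))
    (Cinf.differentiableAt ((hD.clm_apply hY).clm_apply hX)), sub_apply, hXY, hYX]
  ring

lemma lieDForm_apply (h0 : Cinf θ0) (hc : ∀ i, Cinf (θc i)) (p u v : E n) :
    lieDForm θ0 θc G p u v = vfd (Ssp G) (fun q => dForm θ0 θc q u v) p
      + dForm θ0 θc p (fderiv ℝ (Ssp G) p u) v + dForm θ0 θc p u (fderiv ℝ (Ssp G) p v) := by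
  rw [vfd, fderiv_dForm_apply_apply h0 hc contDiff_const contDiff_const]
  simp [lieDForm, add_assoc]

lemma lieD2_eq_lieDForm (h0 : Cinf θ0) (hc : ∀ i, Cinf (θc i)) (hG : Cinf G)
    {X Y : E n → E n} (hX : Cinf X) (hY : Cinf Y) (p : E n) :
    lieD2 (Ssp G) (sbform θ0 θc) X Y p = lieDForm θ0 θc G p (X p) (Y p) := by
  have hS := cinf_Ssp hG
  have hXY : extD (sbform θ0 θc) X Y = fun q => dForm θ0 θc q (X q) (Y q) :=
    funext (extD_eq_dForm h0 hc hX hY)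
  rw [lieD2, hXY, fderiv_dForm_apply_apply h0 hc hX hY, extD_eq_dForm h0 hc (cinf_lieb hS hX) hY,
    extD_eq_dForm h0 hc hX (cinf_lieb hS hY)]
  simp only [lieDForm, lieb, map_sub, LinearMap.sub_apply, LinearMap.add_apply,
    insertEndo_apply, ContinuousLinearMap.coe_coe]
  ring

lemma lieD_iSdθ_eq_lieDForm (h0 : Cinf θ0) (hc : ∀ i, Cinf (θc i)) (hG : Cinf G)
    {X : E n → E n} (hX : Cinf X) (p : E n) :
    fderiv ℝ (extD (sbform θ0 θc) (Ssp G) X) p (Ssp G p)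
        - extD (sbform θ0 θc) (Ssp G) (lieb (Ssp G) X) p
      = lieDForm θ0 θc G p (Ssp G p) (X p) := by
  have hS := cinf_Ssp hG
  have hSX : extD (sbform θ0 θc) (Ssp G) X = fun q => dForm θ0 θc q (Ssp G q) (X q) :=
    funext (extD_eq_dForm h0 hc hS hX)
  rw [hSX, fderiv_dForm_apply_apply h0 hc hS hX, extD_eq_dForm h0 hc hS (cinf_lieb hS hX)]
  simp only [lieDForm, lieb, map_sub, LinearMap.add_apply, insertEndo_apply,
    ContinuousLinearMap.coe_coe]
  ring

end LieDerivativeOfDForm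

section Coordinates

def vertJac (θc : Fin n → E n → ℝ) (i j : Fin n) (p : E n) : ℝ := fderiv ℝ (θc j) p (pdy i)

def horizCurl (θc : Fin n → E n → ℝ) (i j : Fin n) (p : E n) : ℝ :=
  fderiv ℝ (θc j) p (pdx i) - fderiv ℝ (θc i) p (pdx j)

variable {θ0 : E n → ℝ} {θc : Fin n → E n → ℝ} {G : E n → Fin n → ℝ}

lemma ddx_eq (i : Fin n) (p : E n) :
    ddx G i p = pdx i + ypart (fun k => -Nc G k i p) := by
  ext <;> simp [ddx]

lemma hasFDerivAt_Ssp (hG : Cinf G) (p : E n) :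
    HasFDerivAt (Ssp G) ((0 : E n →L[ℝ] ℝ).prod
      (((ContinuousLinearMap.snd ℝ _ _).comp (ContinuousLinearMap.snd ℝ ℝ _)).prod
        (ContinuousLinearMap.pi fun i => -((2 : ℝ) • fderiv ℝ (fun q => G q i) p)))) p :=
  (hasFDerivAt_const 1 p).prodMk (((ContinuousLinearMap.snd ℝ _ _).comp
    (ContinuousLinearMap.snd ℝ ℝ _)).hasFDerivAt.prodMk (hasFDerivAt_pi.2 fun i =>
      (((contDiff_pi.mp hG i).differentiable (by simp) p).hasFDerivAt.const_mul 2).neg))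

lemma fderiv_Ssp_pdx (hG : Cinf G) (p : E n) (i : Fin n) :
    fderiv ℝ (Ssp G) p (pdx i) = ypart (fun k => -(2 * fderiv ℝ (fun q => G q k) p (pdx i))) := by
  rw [(hasFDerivAt_Ssp hG p).fderiv]
  ext <;> simp

lemma fderiv_Ssp_pdy (hG : Cinf G) (p : E n) (j : Fin n) :
    fderiv ℝ (Ssp G) p (pdy j) = pdx j + ypart (fun k => -(2 * Nc G k j p)) := by
  rw [(hasFDerivAt_Ssp hG p).fderiv]
  ext <;> simp [Nc]

lemma sbform_pdx (q : E n) (j : Fin n) : sbform θ0 θc q (pdx j) = θc j q := by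
  simp [sbform, dxi, Pi.single_apply]

lemma sbform_pdy (q : E n) (j : Fin n) : sbform θ0 θc q (pdy j) = 0 := by
  simp [sbform, dxi]

lemma fderiv_formCLM_apply_apply (h0 : Cinf θ0) (hc : ∀ i, Cinf (θc i)) (p u v : E n) :
    fderiv ℝ (formCLM θ0 θc) p u v = fderiv ℝ (fun q => sbform θ0 θc q v) p u := by
  simp_rw [← formCLM_apply]
  rw [fderiv_clm_apply_apply (cinf_formCLM h0 hc).differentiableAt
    (differentiableAt_const v)]
  simp [sbform, dxi]

lemma vfd_sum_mul {X : E n → E n} {a b : Fin n → E n → ℝ} {p : E n}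
    (ha : ∀ k, DifferentiableAt ℝ (a k) p) (hb : ∀ k, DifferentiableAt ℝ (b k) p) :
    vfd X (fun q => ∑ k, a k q * b k q) p
      = ∑ k, (a k p * vfd X (b k) p + b k p * vfd X (a k) p) := by
  rw [vfd, fderiv_fun_sum (A := fun k q => a k q * b k q) fun k _ => (ha k).mul (hb k)]
  simp only [FunLike.coe_sum, Finset.sum_apply]
  refine Finset.sum_congr rfl fun k _ => ?_
  rw [fderiv_fun_mul (ha k) (hb k)]
  simp [vfd]

lemma cinf_Nc (hG : Cinf G) (i j : Fin n) : Cinf (Nc G i j) := by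
  unfold Cinf Nc at *; fun_prop

lemma cinf_vertJac (hc : ∀ i, Cinf (θc i)) (i j : Fin n) : Cinf (vertJac θc i j) := by
  unfold Cinf vertJac at *; fun_prop

variable (h0 : Cinf θ0) (hc : ∀ i, Cinf (θc i))
include h0 hc

lemma dForm_pdx_pdx (p : E n) (i j : Fin n) :
    dForm θ0 θc p (pdx i) (pdx j) = horizCurl θc i j p := by
  simp [dForm, skewPart, horizCurl, fderiv_formCLM_apply_apply h0 hc, sbform_pdx]

lemma dForm_pdx_pdy (p : E n) (i j : Fin n) :
    dForm θ0 θc p (pdx i) (pdy j) = -vertJac θc j i p := by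
  simp [dForm, skewPart, vertJac, fderiv_formCLM_apply_apply h0 hc, sbform_pdx, sbform_pdy]

lemma dForm_pdy_pdy (p : E n) (i j : Fin n) : dForm θ0 θc p (pdy i) (pdy j) = 0 := by
  simp [dForm, skewPart, fderiv_formCLM_apply_apply h0 hc, sbform_pdy]

lemma dForm_ypart_pdx (p : E n) (c : Fin n → ℝ) (j : Fin n) :
    dForm θ0 θc p (ypart c) (pdx j) = ∑ k, c k * vertJac θc k j p := by
  simp [ypart_eq_sum, ← (isAlt_dForm θ0 θc p).neg (pdx j), dForm_pdx_pdy h0 hc]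

lemma dForm_pdx_ypart (p : E n) (i : Fin n) (c : Fin n → ℝ) :
    dForm θ0 θc p (pdx i) (ypart c) = -∑ k, c k * vertJac θc k i p := by
  rw [← (isAlt_dForm θ0 θc p).neg, dForm_ypart_pdx h0 hc]

lemma dForm_ypart_pdy (p : E n) (c : Fin n → ℝ) (j : Fin n) :
    dForm θ0 θc p (ypart c) (pdy j) = 0 := by
  simp [ypart_eq_sum, dForm_pdy_pdy h0 hc]

lemma dForm_pdy_ypart (p : E n) (i : Fin n) (c : Fin n → ℝ) :
    dForm θ0 θc p (pdy i) (ypart c) = 0 := by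
  rw [← (isAlt_dForm θ0 θc p).neg, dForm_ypart_pdy h0 hc, neg_zero]

lemma dForm_pdy_pdx (p : E n) (i j : Fin n) :
    dForm θ0 θc p (pdy i) (pdx j) = vertJac θc i j p := by
  rw [← (isAlt_dForm θ0 θc p).neg, dForm_pdx_pdy h0 hc, neg_neg]

end Coordinates

section Endomorphisms

variable (G : E n → Fin n → ℝ)

lemma dxi_add (i : Fin n) (p u v : E n) : dxi i p (u + v) = dxi i p u + dxi i p v := by
  simp only [dxi, Prod.fst_add, Prod.snd_add, Pi.add_apply]; ring

lemma dxi_smul (i : Fin n) (p : E n) (c : ℝ) (u : E n) : dxi i p (c • u) = c * dxi i p u := by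
  simp only [dxi, Prod.smul_fst, Prod.smul_snd, Pi.smul_apply, smul_eq_mul]; ring

lemma dyi_add (i : Fin n) (p u v : E n) : dyi G i p (u + v) = dyi G i p u + dyi G i p v := by
  simp only [dyi, Prod.fst_add, Prod.snd_add, Pi.add_apply, mul_add, Finset.sum_add_distrib]
  ring

lemma dyi_smul (i : Fin n) (p : E n) (c : ℝ) (u : E n) : dyi G i p (c • u) = c * dyi G i p u := by
  simp only [dyi, Prod.smul_fst, Prod.smul_snd, Pi.smul_apply, smul_eq_mul, mul_add,
    Finset.mul_sum]
  ring_nf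

def jMap (p : E n) : E n →ₗ[ℝ] E n where
  toFun := Jv p
  map_add' u v := by ext <;> simp [Jv, dxi_add]
  map_smul' c u := by ext <;> simp [Jv, dxi_smul]

def hMap (p : E n) : E n →ₗ[ℝ] E n where
  toFun := hv G p
  map_add' u v := by
    simp only [hv, Prod.fst_add, dxi_add, add_smul, Finset.sum_add_distrib]; abel
  map_smul' c u := by
    simp only [hv, Prod.smul_fst, dxi_smul, smul_add, Finset.smul_sum, smul_smul, smul_eq_mul,
      RingHom.id_apply]

def phiMap (p : E n) : E n →ₗ[ℝ] E n where
  toFun := Phi G p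
  map_add' u v := by ext <;> simp [Phi, dxi_add, mul_add, Finset.sum_add_distrib]
  map_smul' c u := by ext <;> simp [Phi, dxi_smul, Finset.mul_sum, mul_left_comm]

def psiMap (p : E n) : E n →ₗ[ℝ] E n where
  toFun := Psi G p
  map_add' u v := by
    change (∑ i, dyi G i p (u + v) • ddx G i p) - phiMap G p (u + v)
      = ((∑ i, dyi G i p u • ddx G i p) - phiMap G p u)
        + ((∑ i, dyi G i p v • ddx G i p) - phiMap G p v)
    simp only [map_add, dyi_add, add_smul, Finset.sum_add_distrib]
    abel
  map_smul' c u := by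
    change (∑ i, dyi G i p (c • u) • ddx G i p) - phiMap G p (c • u)
      = c • ((∑ i, dyi G i p u • ddx G i p) - phiMap G p u)
    simp only [map_smul, dyi_smul, smul_sub, Finset.smul_sum, smul_smul]

variable {G}

@[simp] lemma jMap_pdx (p : E n) (i : Fin n) : jMap p (pdx i) = pdy i := by
  ext <;> simp [jMap, Jv, dxi, pdy]

@[simp] lemma jMap_pdy (p : E n) (i : Fin n) : jMap p (pdy i) = 0 := by
  ext <;> simp [jMap, Jv, dxi]

@[simp] lemma hMap_pdx (p : E n) (i : Fin n) : hMap G p (pdx i) = ddx G i p := by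
  simp [hMap, hv, dxi, Pi.single_apply, ite_smul]

@[simp] lemma hMap_pdy (p : E n) (i : Fin n) : hMap G p (pdy i) = 0 := by
  simp [hMap, hv, dxi]

@[simp] lemma phiMap_pdx (p : E n) (i : Fin n) :
    phiMap G p (pdx i) = ypart (fun k => Rjac G k i p) := by
  ext <;> simp [phiMap, Phi, dxi, Pi.single_apply]

@[simp] lemma phiMap_pdy (p : E n) (i : Fin n) : phiMap G p (pdy i) = 0 := by
  ext <;> simp [phiMap, Phi, dxi]

lemma psiMap_pdx (p : E n) (i : Fin n) :
    psiMap G p (pdx i) = ∑ k, Nc G k i p • ddx G k p - ypart (fun k => Rjac G k i p) := by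
  change (∑ k, dyi G k p (pdx i) • ddx G k p) - phiMap G p (pdx i) = _
  simp [dyi, Pi.single_apply]

lemma psiMap_pdy (p : E n) (j : Fin n) : psiMap G p (pdy j) = ddx G j p := by
  change (∑ i, dyi G i p (pdy j) • ddx G i p) - phiMap G p (pdy j) = _
  simp [dyi, Pi.single_apply, ite_smul]

end Endomorphisms

section WedgeConditions

def VertJacSymm (θc : Fin n → E n → ℝ) (p : E n) : Prop :=
  ∀ i j, vertJac θc i j p = vertJac θc j i p

def HorizCurlEq (G : E n → Fin n → ℝ) (θc : Fin n → E n → ℝ) (p : E n) : Prop := ∀ i j,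
  horizCurl θc i j p = ∑ k, Nc G k i p * vertJac θc k j p - ∑ k, Nc G k j p * vertJac θc k i p

def JacobiVertJacSymm (G : E n → Fin n → ℝ) (θc : Fin n → E n → ℝ) (p : E n) : Prop := ∀ i j,
  ∑ k, Rjac G k i p * vertJac θc k j p = ∑ k, Rjac G k j p * vertJac θc k i p

/-- `∇g = 0` for the dynamical covariant derivative `∇`. -/
def VertJacParallel (G : E n → Fin n → ℝ) (θc : Fin n → E n → ℝ) (p : E n) : Prop := ∀ i j,
  vfd (Ssp G) (vertJac θc i j) p
    = ∑ k, Nc G k i p * vertJac θc k j p + ∑ k, Nc G k j p * vertJac θc i k p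

variable {θ0 : E n → ℝ} {θc : Fin n → E n → ℝ} {G : E n → Fin n → ℝ}
variable (h0 : Cinf θ0) (hc : ∀ i, Cinf (θc i))
include h0 hc

lemma dJf_eq (X Y : E n → E n) (hX : Cinf X) (hY : Cinf Y) (p : E n) :
    dJf (sbform θ0 θc) X Y p = insertEndo (dForm θ0 θc p) (jMap p) (X p) (Y p) := by
  have hJ : ∀ Z : E n → E n, Cinf Z → Cinf (fun q => Jv q (Z q)) := fun Z hZ => by
    unfold Cinf Jv ypart dxi at *; fun_prop
  rw [dJf, extD_eq_dForm h0 hc (hJ X hX) hY, extD_eq_dForm h0 hc hX (hJ Y hY)]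
  rfl

lemma dhf_eq (hG : Cinf G) (X Y : E n → E n) (hX : Cinf X) (hY : Cinf Y) (p : E n) :
    dhf G (sbform θ0 θc) X Y p
      = (insertEndo (dForm θ0 θc p) (hMap G p) - dForm θ0 θc p) (X p) (Y p) := by
  have hh : ∀ Z : E n → E n, Cinf Z → Cinf (fun q => hv G q (Z q)) := fun Z hZ => by
    unfold Cinf hv Ssp ddx dxi Nc at *; fun_prop
  rw [dhf, extD_eq_dForm h0 hc (hh X hX) hY, extD_eq_dForm h0 hc hX (hh Y hY),
    extD_eq_dForm h0 hc hX hY]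
  rfl

lemma dPhif_eq (hG : Cinf G) (X Y : E n → E n) (hX : Cinf X) (hY : Cinf Y) (p : E n) :
    dPhif G (sbform θ0 θc) X Y p = insertEndo (dForm θ0 θc p) (phiMap G p) (X p) (Y p) := by
  have hΦ : ∀ Z : E n → E n, Cinf Z → Cinf (fun q => Phi G q (Z q)) := fun Z hZ => by
    unfold Cinf Phi Rjac vfd ypart Ssp dxi Nc at *; fun_prop
  rw [dPhif, extD_eq_dForm h0 hc (hΦ X hX) hY, extD_eq_dForm h0 hc hX (hΦ Y hY)]
  rfl

lemma nabD_eq (hG : Cinf G) (X Y : E n → E n) (hX : Cinf X) (hY : Cinf Y) (p : E n) :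
    nabD G (sbform θ0 θc) X Y p
      = (lieDForm θ0 θc G p - insertEndo (dForm θ0 θc p) (psiMap G p)) (X p) (Y p) := by
  have hΨ : ∀ Z : E n → E n, Cinf Z → Cinf (fun q => Psi G q (Z q)) := fun Z hZ => by
    unfold Cinf Psi Phi dyi N0c Rjac vfd ypart Ssp ddx dxi Nc at *; fun_prop
  rw [nabD, lieD2_eq_lieDForm h0 hc hG hX hY, extD_eq_dForm h0 hc (hΨ X hX) hY,
    extD_eq_dForm h0 hc hX (hΨ Y hY)]
  rfl

lemma dJf_wedge_dt_iff :
    (∀ X Y Z : E n → E n, Cinf X → Cinf Y → Cinf Z → ∀ p : E n,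
        dJf (sbform θ0 θc) X Y p * (Z p).1 + dJf (sbform θ0 θc) Y Z p * (X p).1
          + dJf (sbform θ0 θc) Z X p * (Y p).1 = 0)
      ↔ ∀ p, VertJacSymm θc p := by
  rw [forall_fields_wedge_dt_iff (fun p => (isAlt_dForm θ0 θc p).insertEndo _)
    (dJf_eq h0 hc)]
  simp [dForm_pdy_pdx h0 hc, dForm_pdx_pdy h0 hc, dForm_pdy_pdy h0 hc, VertJacSymm,
    ← sub_eq_add_neg, sub_eq_zero]

lemma dhf_wedge_dt_iff (hG : Cinf G) :
    (∀ X Y Z : E n → E n, Cinf X → Cinf Y → Cinf Z → ∀ p : E n,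
        dhf G (sbform θ0 θc) X Y p * (Z p).1 + dhf G (sbform θ0 θc) Y Z p * (X p).1
          + dhf G (sbform θ0 θc) Z X p * (Y p).1 = 0)
      ↔ ∀ p, HorizCurlEq G θc p := by
  rw [forall_fields_wedge_dt_iff (fun p => ?_) (dhf_eq h0 hc hG)]
  · refine forall_congr' fun p => ?_
    simp only [ddx_eq, hMap_pdx, hMap_pdy, insertEndo_apply, LinearMap.sub_apply, map_add,
      map_zero, LinearMap.add_apply, LinearMap.zero_apply, dForm_pdx_pdx h0 hc,
      dForm_pdx_pdy h0 hc, dForm_pdy_pdy h0 hc, dForm_ypart_pdx h0 hc, dForm_pdx_ypart h0 hc,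
      dForm_ypart_pdy h0 hc, neg_mul, Finset.sum_neg_distrib, HorizCurlEq]
    refine ⟨fun h i j => by linarith [h.1 i j],
      fun h => ⟨fun i j => by linarith [h i j], fun i j => by ring, fun i j => by ring⟩⟩
  · intro u
    simp [(isAlt_dForm θ0 θc p).insertEndo _ u, isAlt_dForm θ0 θc p u]

lemma dPhif_wedge_dt_iff (hG : Cinf G) :
    (∀ X Y Z : E n → E n, Cinf X → Cinf Y → Cinf Z → ∀ p : E n,
        dPhif G (sbform θ0 θc) X Y p * (Z p).1 + dPhif G (sbform θ0 θc) Y Z p * (X p).1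
          + dPhif G (sbform θ0 θc) Z X p * (Y p).1 = 0)
      ↔ ∀ p, JacobiVertJacSymm G θc p := by
  rw [forall_fields_wedge_dt_iff (fun p => (isAlt_dForm θ0 θc p).insertEndo _)
    (dPhif_eq h0 hc hG)]
  simp [dForm_ypart_pdx h0 hc, dForm_pdx_ypart h0 hc, dForm_ypart_pdy h0 hc, JacobiVertJacSymm,
    ← sub_eq_add_neg, sub_eq_zero]

end WedgeConditions

section LieDFormComponents

variable {θ0 : E n → ℝ} {θc : Fin n → E n → ℝ} {G : E n → Fin n → ℝ}
variable (h0 : Cinf θ0) (hc : ∀ i, Cinf (θc i))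
include h0 hc

lemma insertEndo_psiMap_pdx_pdy (p : E n) (i j : Fin n) :
    insertEndo (dForm θ0 θc p) (psiMap G p) (pdx i) (pdy j)
      = -∑ k, Nc G k i p * vertJac θc j k p + horizCurl θc i j p
        + ∑ k, Nc G k j p * vertJac θc k i p := by
  simp [psiMap_pdx, psiMap_pdy, ddx_eq, dForm_pdx_pdx h0 hc, dForm_pdx_pdy h0 hc,
    dForm_ypart_pdy h0 hc, dForm_pdx_ypart h0 hc, add_assoc]

lemma insertEndo_psiMap_pdy_pdy (p : E n) (i j : Fin n) :
    insertEndo (dForm θ0 θc p) (psiMap G p) (pdy i) (pdy j)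
      = vertJac θc i j p - vertJac θc j i p := by
  simp [psiMap_pdy, ddx_eq, dForm_pdx_pdy h0 hc, dForm_pdy_pdx h0 hc, dForm_ypart_pdy h0 hc,
    dForm_pdy_ypart h0 hc]
  ring

variable (hG : Cinf G)
include hG

lemma lieDForm_pdy_pdy (p : E n) (i j : Fin n) :
    lieDForm θ0 θc G p (pdy i) (pdy j) = vertJac θc i j p - vertJac θc j i p := by
  simp [lieDForm_apply h0 hc, vfd, fderiv_Ssp_pdy hG, dForm_pdx_pdy h0 hc,
    dForm_pdy_pdx h0 hc, dForm_pdy_pdy h0 hc, dForm_ypart_pdy h0 hc, dForm_pdy_ypart h0 hc]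
  ring

lemma lieDForm_pdx_pdy (p : E n) (i j : Fin n) :
    lieDForm θ0 θc G p (pdx i) (pdy j) = -vfd (Ssp G) (vertJac θc j i) p
      + horizCurl θc i j p + 2 * ∑ k, Nc G k j p * vertJac θc k i p := by
  have h : (fun q => dForm θ0 θc q (pdx i) (pdy j)) = fun q => -vertJac θc j i q :=
    funext fun q => dForm_pdx_pdy h0 hc q i j
  simp [lieDForm_apply h0 hc, h, vfd, fderiv_Ssp_pdx hG, fderiv_Ssp_pdy hG,
    dForm_pdx_pdx h0 hc, dForm_ypart_pdy h0 hc, dForm_pdx_ypart h0 hc, Finset.mul_sum, mul_assoc]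
  ring

lemma lieDForm_pdx_pdx (p : E n) (i j : Fin n) :
    lieDForm θ0 θc G p (pdx i) (pdx j) = vfd (Ssp G) (horizCurl θc i j) p
      - 2 * ∑ k, fderiv ℝ (fun q => G q k) p (pdx i) * vertJac θc k j p
      + 2 * ∑ k, fderiv ℝ (fun q => G q k) p (pdx j) * vertJac θc k i p := by
  have h : (fun q => dForm θ0 θc q (pdx i) (pdx j)) = horizCurl θc i j :=
    funext fun q => dForm_pdx_pdx h0 hc q i j
  simp [lieDForm_apply h0 hc, h, fderiv_Ssp_pdx hG, dForm_ypart_pdx h0 hc,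
    dForm_pdx_ypart h0 hc, Finset.mul_sum, mul_assoc]
  ring

end LieDFormComponents

section ComponentIdentities

variable {θ0 : E n → ℝ} {θc : Fin n → E n → ℝ} {G : E n → Fin n → ℝ}

lemma vfd_horizCurl (hc : ∀ i, Cinf (θc i)) (hG : Cinf G)
    (h2 : ∀ q, HorizCurlEq G θc q) (p : E n) (i j : Fin n) :
    vfd (Ssp G) (horizCurl θc i j) p
      = ∑ k, (Nc G k i p * vfd (Ssp G) (vertJac θc k j) p
            + vertJac θc k j p * vfd (Ssp G) (Nc G k i) p)
        - ∑ k, (Nc G k j p * vfd (Ssp G) (vertJac θc k i) p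
            + vertJac θc k i p * vfd (Ssp G) (Nc G k j) p) := by
  have hN : ∀ a b, DifferentiableAt ℝ (Nc G a b) p := fun a b => (cinf_Nc hG a b).differentiableAt
  have hg : ∀ a b, DifferentiableAt ℝ (vertJac θc a b) p := fun a b =>
    (cinf_vertJac hc a b).differentiableAt
  rw [← vfd_sum_mul (hN · i) (hg · j), ← vfd_sum_mul (hN · j) (hg · i), vfd, vfd, vfd,
    ← sub_apply, ← fderiv_fun_sub (by fun_prop) (by fun_prop)]
  exact congrArg (fderiv ℝ · p (Ssp G p)) (funext fun q => h2 q i j)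

lemma lieDForm_pdx_pdx_eq (h0 : Cinf θ0) (hc : ∀ i, Cinf (θc i)) (hG : Cinf G)
    (h1 : ∀ q, VertJacSymm θc q) (h2 : ∀ q, HorizCurlEq G θc q)
    (h4 : ∀ q, VertJacParallel G θc q) (p : E n) (i j : Fin n) :
    lieDForm θ0 θc G p (pdx i) (pdx j)
      = ∑ k, Rjac G k j p * vertJac θc k i p - ∑ k, Rjac G k i p * vertJac θc k j p := by
  have hNg : ∀ a b, ∑ k, Nc G k a p * vfd (Ssp G) (vertJac θc k b) p
      = ∑ k, (∑ l, Nc G k l p * Nc G l a p) * vertJac θc k b p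
        + ∑ k, ∑ l, Nc G k a p * Nc G l b p * vertJac θc k l p := fun a b => by
    have e : ∀ k, Nc G k a p * vfd (Ssp G) (vertJac θc k b) p
        = ∑ l, Nc G k a p * (Nc G l k p * vertJac θc l b p)
          + ∑ l, Nc G k a p * (Nc G l b p * vertJac θc k l p) := fun k => by
      rw [h4 p k b, mul_add, Finset.mul_sum, Finset.mul_sum]
    rw [Finset.sum_congr rfl fun k _ => e k, Finset.sum_add_distrib,
      Finset.sum_comm (f := fun k l => Nc G k a p * (Nc G l k p * vertJac θc l b p))]
    simp only [Finset.sum_mul]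
    congr 1 <;> exact Finset.sum_congr rfl fun _ _ => Finset.sum_congr rfl fun _ _ => by ring
  have hNNg : ∑ k, ∑ l, Nc G k i p * Nc G l j p * vertJac θc k l p
      = ∑ k, ∑ l, Nc G k j p * Nc G l i p * vertJac θc k l p := by
    rw [Finset.sum_comm]
    exact Finset.sum_congr rfl fun k _ => Finset.sum_congr rfl fun l _ => by rw [h1 p l k]; ring
  rw [lieDForm_pdx_pdx h0 hc hG, vfd_horizCurl hc hG h2]
  simp only [Finset.sum_add_distrib]
  rw [hNg, hNg, hNNg]
  simp only [Rjac, sub_mul, Finset.sum_sub_distrib, Finset.mul_sum, mul_comm (vertJac θc _ _ p)]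
  ring_nf

lemma VertJacSymm.sum_mul_comm {p : E n} (h1 : VertJacSymm θc p) (a : Fin n → ℝ) (i : Fin n) :
    ∑ k, a k * vertJac θc i k p = ∑ k, a k * vertJac θc k i p :=
  Finset.sum_congr rfl fun k _ => by rw [h1 i k]

lemma vertJacParallel_and_horizCurlEq (h0 : Cinf θ0) (hc : ∀ i, Cinf (θc i)) (hG : Cinf G)
    (h1 : ∀ q, VertJacSymm θc q) (hxy : ∀ q i j, lieDForm θ0 θc G q (pdx i) (pdy j) = 0)
    (p : E n) : VertJacParallel G θc p ∧ HorizCurlEq G θc p := by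
  have hS : ∀ i j, vfd (Ssp G) (vertJac θc i j) p = vfd (Ssp G) (vertJac θc j i) p :=
    fun i j => by rw [funext fun q => h1 q i j]
  have hA : ∀ i j, horizCurl θc j i p = -horizCurl θc i j p := fun i j => by
    simp only [horizCurl]; ring
  have hxy' := fun i j => (lieDForm_pdx_pdy h0 hc hG p i j).symm.trans (hxy p i j)
  refine ⟨fun i j => ?_, fun i j => ?_⟩
  · rw [(h1 p).sum_mul_comm]
    linarith [hxy' i j, hxy' j i, hS i j, hA i j]
  · linarith [hxy' i j, hxy' j i, hS i j, hA i j]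

lemma lieDForm_pdx_pdy_eq_zero (h0 : Cinf θ0) (hc : ∀ i, Cinf (θc i)) (hG : Cinf G) {p : E n}
    (h1 : VertJacSymm θc p) (h2 : HorizCurlEq G θc p) (h4 : VertJacParallel G θc p)
    (i j : Fin n) : lieDForm θ0 θc G p (pdx i) (pdy j) = 0 := by
  rw [lieDForm_pdx_pdy h0 hc hG, h4 j i, h2 i j, h1.sum_mul_comm]
  ring

lemma insertEndo_psiMap_pdx_pdx_eq_zero (h0 : Cinf θ0) (hc : ∀ i, Cinf (θc i)) {p : E n}
    (h1 : VertJacSymm θc p) (h2 : HorizCurlEq G θc p) (h3 : JacobiVertJacSymm G θc p)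
    (i j : Fin n) : insertEndo (dForm θ0 θc p) (psiMap G p) (pdx i) (pdx j) = 0 := by
  have hl : ∀ k, Nc G k i p * horizCurl θc k j p
      + -(Nc G k i p * ∑ l, Nc G l k p * vertJac θc l j p)
      = -∑ l, Nc G k i p * (Nc G l j p * vertJac θc l k p) := fun k => by
    rw [h2 k j, ← Finset.mul_sum]; ring
  have hr : ∀ k, Nc G k j p * horizCurl θc i k p + Nc G k j p * ∑ l, Nc G l k p * vertJac θc l i p
      = ∑ l, Nc G k j p * (Nc G l i p * vertJac θc l k p) := fun k => by
    rw [h2 i k, ← Finset.mul_sum]; ring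
  have hswap : ∑ k, ∑ l, Nc G k j p * (Nc G l i p * vertJac θc l k p)
      = ∑ k, ∑ l, Nc G k i p * (Nc G l j p * vertJac θc l k p) := by
    rw [Finset.sum_comm]
    exact Finset.sum_congr rfl fun k _ => Finset.sum_congr rfl fun l _ => by rw [h1 k l]; ring
  simp only [insertEndo_apply, psiMap_pdx, ddx_eq, smul_add, map_sub, map_sum, map_add, map_smul,
    LinearMap.sub_apply, LinearMap.coe_sum, Finset.sum_apply, LinearMap.add_apply,
    LinearMap.smul_apply, dForm_pdx_pdx h0 hc, smul_eq_mul, dForm_ypart_pdx h0 hc, neg_mul,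
    Finset.sum_neg_distrib, mul_neg, dForm_pdx_ypart h0 hc, neg_neg, sub_neg_eq_add]
  rw [Finset.sum_congr rfl fun k _ => hl k, Finset.sum_congr rfl fun k _ => hr k,
    Finset.sum_neg_distrib, hswap, h3 i j]
  ring

end ComponentIdentities

section LieDerivativeConditions

variable {θ0 : E n → ℝ} {θc : Fin n → E n → ℝ} {G : E n → Fin n → ℝ}
variable (h0 : Cinf θ0) (hc : ∀ i, Cinf (θc i)) (hG : Cinf G)
include h0 hc hG

lemma extDop_lieD_eq_zero_iff :
    (∀ X Y : E n → E n, Cinf X → Cinf Y → ∀ p : E n,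
        extDop (lieD (Ssp G) (sbform θ0 θc)) X Y p = 0) ↔
      ∀ p, (∀ u v : E n, u.1 = 0 → v.1 = 0 → lieDForm θ0 θc G p u v = 0) ∧
        ∀ v, lieDForm θ0 θc G p (Ssp G p) v = 0 := by
  refine ⟨fun h p => ?_, fun h X Y hX hY p => ?_⟩
  · refine ((isAlt_lieDForm θ0 θc G p).eq_zero_iff (α := LinearMap.fst ℝ ℝ _) (s := Ssp G p)
      rfl).1 fun u v => ?_
    simpa [extDop_lieD_eq_lieDForm h0 hc hG contDiff_const contDiff_const] using
      h (fun _ => u) (fun _ => v) contDiff_const contDiff_const p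
  · rw [extDop_lieD_eq_lieDForm h0 hc hG hX hY]
    exact ((isAlt_lieDForm θ0 θc G p).eq_zero_iff (α := LinearMap.fst ℝ ℝ _) (s := Ssp G p)
      rfl).2 (h p) _ _

lemma lieD_iSdθ_eq_zero_iff :
    (∀ X : E n → E n, Cinf X → ∀ p : E n,
        fderiv ℝ (extD (sbform θ0 θc) (Ssp G) X) p (Ssp G p)
          - extD (sbform θ0 θc) (Ssp G) (lieb (Ssp G) X) p = 0) ↔
      ∀ p v, lieDForm θ0 θc G p (Ssp G p) v = 0 := by
  refine ⟨fun h p v => ?_, fun h X hX p => ?_⟩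
  · simpa [lieD_iSdθ_eq_lieDForm h0 hc hG contDiff_const] using h (fun _ => v) contDiff_const p
  · rw [lieD_iSdθ_eq_lieDForm h0 hc hG hX, h]

lemma nabD_wedge_dt_iff :
    (∀ X Y Z : E n → E n, Cinf X → Cinf Y → Cinf Z → ∀ p : E n,
        nabD G (sbform θ0 θc) X Y p * (Z p).1 + nabD G (sbform θ0 θc) Y Z p * (X p).1
          + nabD G (sbform θ0 θc) Z X p * (Y p).1 = 0)
      ↔ ∀ p, VertJacParallel G θc p ∧ ∀ i j, lieDForm θ0 θc G p (pdx i) (pdx j)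
          = insertEndo (dForm θ0 θc p) (psiMap G p) (pdx i) (pdx j) := by
  rw [forall_fields_wedge_dt_iff (fun p u => ?_) (nabD_eq h0 hc hG)]
  · refine forall_congr' fun p => ?_
    simp only [LinearMap.sub_apply, sub_eq_zero, lieDForm_pdx_pdy h0 hc hG,
      insertEndo_psiMap_pdx_pdy h0 hc, lieDForm_pdy_pdy h0 hc hG, insertEndo_psiMap_pdy_pdy h0 hc,
      implies_true, and_true]
    exact ⟨fun h => ⟨fun i j => by linarith [h.2 j i], h.1⟩,
      fun h => ⟨h.2, fun i j => by linarith [h.1 j i]⟩⟩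
  · simp [isAlt_lieDForm θ0 θc G p u, (isAlt_dForm θ0 θc p).insertEndo _ u]

lemma lieDForm_ker_eq_zero_iff :
    (∀ p (u v : E n), u.1 = 0 → v.1 = 0 → lieDForm θ0 θc G p u v = 0) ↔
      ∀ p, VertJacSymm θc p ∧ HorizCurlEq G θc p ∧ JacobiVertJacSymm G θc p ∧
        VertJacParallel G θc p := by
  simp only [forall_ker_fst_iff (isAlt_lieDForm θ0 θc G _)]
  constructor
  · intro h
    have h1 : ∀ q, VertJacSymm θc q := fun q i j => by
      linarith [(lieDForm_pdy_pdy h0 hc hG q i j).symm.trans ((h q).2.2 i j)]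
    have h24 := vertJacParallel_and_horizCurlEq h0 hc hG h1 fun q => (h q).2.1
    refine fun p => ⟨h1 p, (h24 p).2, fun i j => ?_, (h24 p).1⟩
    have hxx := (h p).1 i j
    rw [lieDForm_pdx_pdx_eq h0 hc hG h1 (fun q => (h24 q).2) (fun q => (h24 q).1)] at hxx
    linarith
  · intro h p
    refine ⟨fun i j => ?_, lieDForm_pdx_pdy_eq_zero h0 hc hG (h p).1 (h p).2.1 (h p).2.2.2,
      fun i j => by rw [lieDForm_pdy_pdy h0 hc hG, (h p).1 i j, sub_self]⟩
    rw [lieDForm_pdx_pdx_eq h0 hc hG (fun q => (h q).1) (fun q => (h q).2.1)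
      (fun q => (h q).2.2.2), (h p).2.2.1 i j, sub_self]

end LieDerivativeConditions

theorem stmt16_general (n : ℕ) (G : E n → Fin n → ℝ) (hG : Cinf G)
    (θ0 : E n → ℝ) (θc : Fin n → E n → ℝ) (h0 : Cinf θ0) (hc : ∀ i, Cinf (θc i)) :
    (∀ X Y : E n → E n, Cinf X → Cinf Y → ∀ p : E n,
        extDop (lieD (Ssp G) (sbform θ0 θc)) X Y p = 0)
    ↔ ((∀ X Y Z : E n → E n, Cinf X → Cinf Y → Cinf Z → ∀ p : E n,
          dJf (sbform θ0 θc) X Y p * (Z p).1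
          + dJf (sbform θ0 θc) Y Z p * (X p).1
          + dJf (sbform θ0 θc) Z X p * (Y p).1 = 0)
        ∧ (∀ X Y Z : E n → E n, Cinf X → Cinf Y → Cinf Z → ∀ p : E n,
            dhf G (sbform θ0 θc) X Y p * (Z p).1
            + dhf G (sbform θ0 θc) Y Z p * (X p).1
            + dhf G (sbform θ0 θc) Z X p * (Y p).1 = 0)
        ∧ (∀ X Y Z : E n → E n, Cinf X → Cinf Y → Cinf Z → ∀ p : E n,
            dPhif G (sbform θ0 θc) X Y p * (Z p).1
            + dPhif G (sbform θ0 θc) Y Z p * (X p).1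
            + dPhif G (sbform θ0 θc) Z X p * (Y p).1 = 0)
        ∧ (∀ X Y Z : E n → E n, Cinf X → Cinf Y → Cinf Z → ∀ p : E n,
            nabD G (sbform θ0 θc) X Y p * (Z p).1
            + nabD G (sbform θ0 θc) Y Z p * (X p).1
            + nabD G (sbform θ0 θc) Z X p * (Y p).1 = 0)
        ∧ (∀ X : E n → E n, Cinf X → ∀ p : E n,
            fderiv ℝ (extD (sbform θ0 θc) (Ssp G) X) p (Ssp G p)
              - extD (sbform θ0 θc) (Ssp G) (lieb (Ssp G) X) p = 0)) := by
  rw [extDop_lieD_eq_zero_iff h0 hc hG, forall_and, lieDForm_ker_eq_zero_iff h0 hc hG,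
    dJf_wedge_dt_iff h0 hc, dhf_wedge_dt_iff h0 hc hG, dPhif_wedge_dt_iff h0 hc hG,
    nabD_wedge_dt_iff h0 hc hG, lieD_iSdθ_eq_zero_iff h0 hc hG]
  constructor
  · rintro ⟨h, hS⟩
    refine ⟨fun p => (h p).1, fun p => (h p).2.1, fun p => (h p).2.2.1,
      fun p => ⟨(h p).2.2.2, fun i j => ?_⟩, hS⟩
    rw [insertEndo_psiMap_pdx_pdx_eq_zero h0 hc (h p).1 (h p).2.1 (h p).2.2.1,
      lieDForm_pdx_pdx_eq h0 hc hG (fun q => (h q).1) (fun q => (h q).2.1) (fun q => (h q).2.2.2),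
      (h p).2.2.1 i j, sub_self]
  · rintro ⟨h1, h2, h3, h4, hS⟩
    exact ⟨fun p => ⟨h1 p, h2 p, h3 p, (h4 p).1⟩, hS⟩

/-- Let `θ = θ₀ dt + Σᵢ θᵢ δxⁱ` be a semi-basic 1-form on `E`
which is not `d_J`-closed.  Then `L_Sθ` is closed if and only if:
(H1) `(d_Jθ)∧dt = 0`; (H2) `(d_hθ)∧dt = 0`; (H3) `(d_Φθ)∧dt = 0`;
(H4) `(∇dθ)∧dt = 0` with `∇dθ = L_S(dθ) − i_Ψ(dθ)`; and
(DS) the 1-form `i_S dθ` is a dual symmetry of `S`, i.e. `L_S(i_S dθ) = 0`. -/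
theorem stmt16 (n : ℕ) (hn : 1 ≤ n) (G : E n → Fin n → ℝ) (hG : Cinf G)
    (θ0 : E n → ℝ) (θc : Fin n → E n → ℝ) (h0 : Cinf θ0) (hc : ∀ i, Cinf (θc i))
    (hnJ : ¬ ∀ X Y : E n → E n, Cinf X → Cinf Y → ∀ p : E n,
      dJf (sbform θ0 θc) X Y p = 0) :
    (∀ X Y : E n → E n, Cinf X → Cinf Y → ∀ p : E n,
        extDop (lieD (Ssp G) (sbform θ0 θc)) X Y p = 0)
    ↔ ((∀ X Y Z : E n → E n, Cinf X → Cinf Y → Cinf Z → ∀ p : E n,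
          dJf (sbform θ0 θc) X Y p * (Z p).1
          + dJf (sbform θ0 θc) Y Z p * (X p).1
          + dJf (sbform θ0 θc) Z X p * (Y p).1 = 0)
        ∧ (∀ X Y Z : E n → E n, Cinf X → Cinf Y → Cinf Z → ∀ p : E n,
            dhf G (sbform θ0 θc) X Y p * (Z p).1
            + dhf G (sbform θ0 θc) Y Z p * (X p).1
            + dhf G (sbform θ0 θc) Z X p * (Y p).1 = 0)
        ∧ (∀ X Y Z : E n → E n, Cinf X → Cinf Y → Cinf Z → ∀ p : E n,
            dPhif G (sbform θ0 θc) X Y p * (Z p).1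
            + dPhif G (sbform θ0 θc) Y Z p * (X p).1
            + dPhif G (sbform θ0 θc) Z X p * (Y p).1 = 0)
        ∧ (∀ X Y Z : E n → E n, Cinf X → Cinf Y → Cinf Z → ∀ p : E n,
            nabD G (sbform θ0 θc) X Y p * (Z p).1
            + nabD G (sbform θ0 θc) Y Z p * (X p).1
            + nabD G (sbform θ0 θc) Z X p * (Y p).1 = 0)
        ∧ (∀ X : E n → E n, Cinf X → ∀ p : E n,
            fderiv ℝ (extD (sbform θ0 θc) (Ssp G) X) p (Ssp G p)
              - extD (sbform θ0 θc) (Ssp G) (lieb (Ssp G) X) p = 0)) :=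
  stmt16_general n G hG θ0 θc h0 hc
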